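/- Define the parabolic type subalgebra Ã^α as the R-span of {c^λ_{s,t} : (s,t) ∈ Ĩ(λ,ε) × J̃(λ,ε), (λ,ε) ∈ Ω}, where Ĩ(λ,0) = J̃(λ,0) = T⁺_α(λ), Ĩ(λ,1) = T⁻_α(λ), J̃(λ,1) = T(λ). Then Ã^α is a subalgebra of A containing A^α, and Ã^α is a standardly based algebra (in the sense of Du–Rui) with standard basis Z̃^α, with respect to the poset Ω. -/

import Mathlib

open MulOpposite

noncomputable section

universe u

section CompFactors

variable (A : Type u) [Ring A]

/-- The `i`-th factor of a series of submodules. -/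
abbrev CompSeriesFactor {M : Type u} [AddCommGroup M] [Module A M]
    (s : CompositionSeries (Submodule A M)) (i : Fin s.length) : Type u :=
  ↥(s i.succ) ⧸ Submodule.comap (s i.succ).subtype (s i.castSucc)

open Classical in
/-- The multiplicity of `N` among the composition factors of `M` (returning `0` if `M`
has no composition series); by the Jordan–Hölder theorem this does not depend on the
choice of composition series. -/
def compMult (M : Type u) [AddCommGroup M] [Module A M]
    (N : Type u) [AddCommGroup N] [Module A N] : ℕ :=
  if h : ∃ s : CompositionSeries (Submodule A M), s.head = ⊥ ∧ s.last = ⊤ then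
    (Finset.univ.filter fun i : Fin h.choose.length =>
      Nonempty (CompSeriesFactor A h.choose i ≃ₗ[A] N)).card
  else 0

/-- `N` is (isomorphic to) a composition factor, i.e. a simple subquotient, of `M`. -/
def IsCompFactor (M N : Type u) [AddCommGroup M] [Module A M]
    [AddCommGroup N] [Module A N] : Prop :=
  ∃ p q : Submodule A M, p ≤ q ∧
    IsSimpleModule A (↥q ⧸ Submodule.comap q.subtype p) ∧
    Nonempty ((↥q ⧸ Submodule.comap q.subtype p) ≃ₗ[A] N)

/-- `M₁` and `M₂` have a common composition factor. -/
def ShareFactor (M₁ M₂ : Type u) [AddCommGroup M₁] [Module A M₁]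
    [AddCommGroup M₂] [Module A M₂] : Prop :=
  ∃ (p q : Submodule A M₁) (p' q' : Submodule A M₂), p ≤ q ∧ p' ≤ q' ∧
    IsSimpleModule A (↥q ⧸ Submodule.comap q.subtype p) ∧
    Nonempty ((↥q ⧸ Submodule.comap q.subtype p) ≃ₗ[A]
      (↥q' ⧸ Submodule.comap q'.subtype p'))

/-- `e` is a primitive central idempotent (a block idempotent) of `A`. -/
def IsPrimCentralIdem (e : A) : Prop :=
  IsIdempotentElem e ∧ e ∈ Set.center A ∧ e ≠ 0 ∧
    ∀ f g : A, IsIdempotentElem f → IsIdempotentElem g → f ∈ Set.center A →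
      g ∈ Set.center A → f * g = 0 → e = f + g → f = 0 ∨ g = 0

/-- A module belongs to the block of the central idempotent `e` when `e` acts as
the identity on it. -/
def InBlock (e : A) (M : Type u) [AddCommGroup M] [Module A M] : Prop :=
  ∀ m : M, e • m = m

/-- `P` is a projective cover of `L`. -/
def IsProjCover (P L : Type u) [AddCommGroup P] [Module A P]
    [AddCommGroup L] [Module A L] : Prop :=
  Module.Projective A P ∧ ∃ f : P →ₗ[A] L, Function.Surjective f ∧
    ∀ N : Submodule A P, N ⊔ LinearMap.ker f = ⊤ → N = ⊤

end CompFactors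

/-- The bilinear form on `ι → R` induced by a matrix `φ`. -/
def formSum {R ι : Type u} [CommRing R] [Fintype ι] (φ : ι → ι → R) (x y : ι → R) : R :=
  ∑ s, ∑ t, x s * φ s t * y t

section Cellular

variable (R A : Type u) [CommRing R] [Ring A] [Algebra R A]
variable (Λp : Type u) [PartialOrder Λp] (T : Λp → Type u) [∀ l, Fintype (T l)]

/-- A cell datum (Graham–Lehrer) for the `R`-algebra `A`: a cellular basis
`c l s t` indexed by pairs of elements of `T l` for `l` in the poset `Λp`, an
anti-automorphism `star` swapping the two indices, and structure constants
`coeff` for right multiplication, acting on the second index modulo higher terms. -/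
structure CellDatum where
  c : ∀ l, T l → T l → A
  basis : Module.Basis ((l : Λp) × (T l × T l)) R A
  basis_eq : ∀ l s t, basis ⟨l, (s, t)⟩ = c l s t
  star : A →ₗ[R] A
  star_mul : ∀ a b, star (a * b) = star b * star a
  star_c : ∀ l s t, star (c l s t) = c l t s
  coeff : ∀ l, T l → A → T l → R
  mul_rule : ∀ (l) (s t : T l) (a : A),
    c l s t * a - ∑ v, coeff l t a v • c l s v ∈
      Submodule.span R {x : A | ∃ l' s' t', l < l' ∧ x = c l' s' t'}

variable {R A Λp T}

namespace CellDatum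

variable (D : CellDatum R A Λp T)

/-- The span of the cellular basis elements with index strictly above `l`. -/
def Aup (l : Λp) : Submodule R A :=
  Submodule.span R {x : A | ∃ l' s' t', l < l' ∧ x = D.c l' s' t'}

/-- The span of the cellular basis elements with index in `P`. -/
def cellSpan (P : Set Λp) : Submodule R A :=
  Submodule.span R {x : A | ∃ l s t, l ∈ P ∧ x = D.c l s t}

/-- The data of right standard (cell) modules: each `T l → R` is a right `A`-module
(i.e. a module over `Aᵐᵒᵖ`), the action is `R`-bilinear, and on the standard basis it is
given by the structure constants of the cell datum. -/
def RightStd [∀ l, DecidableEq (T l)] [∀ l, Module Aᵐᵒᵖ (T l → R)] : Prop :=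
  (∀ (l : Λp) (r : R) (a : Aᵐᵒᵖ) (x : T l → R), a • (r • x) = r • (a • x)) ∧
  (∀ (l : Λp) (t : T l) (a : A),
    (op a) • (Pi.single t 1 : T l → R) = fun v => D.coeff l t a v)

/-- The data of left standard (cell) modules. -/
def LeftStd [∀ l, DecidableEq (T l)] [∀ l, Module A (T l → R)] : Prop :=
  (∀ (l : Λp) (r : R) (a : A) (x : T l → R), a • (r • x) = r • (a • x)) ∧
  (∀ (l : Λp) (t : T l) (a : A),
    a • (Pi.single t 1 : T l → R) = fun v => D.coeff l t (D.star a) v)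

/-- `φ` is the matrix of the canonical bilinear form on the standard modules:
`c l u s * c l t v ≡ φ l s t • c l u v` modulo `A^{∨l}`. -/
def FormData (φ : ∀ l, T l → T l → R) : Prop :=
  ∀ (l : Λp) (s t u v : T l), D.c l u s * D.c l t v - φ l s t • D.c l u v ∈ D.Aup l

section Idem

variable {Λt M X : Type u} [PartialOrder Λt] [PartialOrder X] [Fintype M]

/-- Assumptions (A1)–(A4): `ι : Λp → Λt` realizes the cell poset inside the
bigger poset `Λt`, `κ : M → Λt` realizes the index set of the orthogonal idempotent
decomposition `1 = ∑ e μ`, each `e μ` lies in the span of the `c l s t` with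
`ι l ≥ κ μ`, and every column of the cellular basis is fixed by some `e μ`. -/
structure IdemData (ι : Λp → Λt) (κ : M → Λt) (e : M → A) : Prop where
  order_iff : ∀ l l', ι l ≤ ι l' ↔ l ≤ l'
  kappa_inj : Function.Injective κ
  ne_zero : ∀ μ, e μ ≠ 0
  idem : ∀ μ, e μ * e μ = e μ
  orth : ∀ μ ν, μ ≠ ν → e μ * e ν = 0
  sum_one : ∑ μ, e μ = 1
  mem_span : ∀ μ, e μ ∈ Submodule.span R {x : A | ∃ l s t, κ μ ≤ ι l ∧ x = D.c l s t}
  exists_idem : ∀ (l) (t : T l), ∃ μ, (∀ s, D.c l s t * e μ = D.c l s t) ∧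
    (∀ u, e μ * D.c l t u = D.c l t u)

/-- `T(λ,μ)`: the indices `t` whose column (resp. row) of the cellular basis is fixed
by right (resp. left) multiplication by `e μ`. -/
def Tset (e : M → A) (l : Λp) (μ : M) : Set (T l) :=
  {t | (∀ s, D.c l s t * e μ = D.c l s t) ∧ (∀ u, e μ * D.c l t u = D.c l t u)}

/-- `T⁺_α(λ)`. -/
def Tplus (e : M → A) (ι : Λp → Λt) (κ : M → Λt) (α : Λt → X) (l : Λp) : Set (T l) :=
  {t | ∃ μ, t ∈ D.Tset e l μ ∧ α (ι l) = α (κ μ)}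

/-- `T⁻_α(λ)`. -/
def Tminus (e : M → A) (ι : Λp → Λt) (κ : M → Λt) (α : Λt → X) (l : Λp) : Set (T l) :=
  {t | ∃ μ, t ∈ D.Tset e l μ ∧ α (κ μ) < α (ι l)}

/-- `I(λ,ε)`: `T⁺_α(λ)` for `ε = false` and `T⁻_α(λ)` for `ε = true`. -/
def Iset (e : M → A) (ι : Λp → Λt) (κ : M → Λt) (α : Λt → X) (l : Λp) : Bool → Set (T l)
  | false => D.Tplus e ι κ α l
  | true => D.Tminus e ι κ α l

/-- `J̃(λ,ε)`: `T⁺_α(λ)` for `ε = false` and all of `T(λ)` for `ε = true`. -/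
def Jset (e : M → A) (ι : Λp → Λt) (κ : M → Λt) (α : Λt → X) (l : Λp) : Bool → Set (T l)
  | false => D.Tplus e ι κ α l
  | true => Set.univ

/-- The Levi type subalgebra `A^α` (as a submodule). -/
def levi (e : M → A) (ι : Λp → Λt) (κ : M → Λt) (α : Λt → X) : Submodule R A :=
  Submodule.span R {x : A | ∃ l ε s t, s ∈ D.Iset e ι κ α l ε ∧ t ∈ D.Iset e ι κ α l ε ∧
    x = D.c l s t}

/-- The parabolic type subalgebra `Ã^α` (as a submodule). -/
def parab (e : M → A) (ι : Λp → Λt) (κ : M → Λt) (α : Λt → X) : Submodule R A :=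
  Submodule.span R {x : A | ∃ l ε s t, s ∈ D.Iset e ι κ α l ε ∧ t ∈ D.Jset e ι κ α l ε ∧
    x = D.c l s t}

/-- The span of the elements of the cellular basis of `A^α` of index strictly
above `(l,ε)` in `Ω`. -/
def upperOm (e : M → A) (ι : Λp → Λt) (κ : M → Λt) (α : Λt → X) (p : Λp × Bool) :
    Submodule R A :=
  Submodule.span R {x : A | ∃ (q : Λp × Bool) (s t : T q.1),
    ((p.2 < q.2) ∨ (p.2 = q.2 ∧ p.1 < q.1)) ∧
    s ∈ D.Iset e ι κ α q.1 q.2 ∧ t ∈ D.Iset e ι κ α q.1 q.2 ∧ x = D.c q.1 s t}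

/-- The span of the elements of the standard basis of `Ã^α` of index strictly
above `(l,ε)` in `Ω`. -/
def upperOmParab (e : M → A) (ι : Λp → Λt) (κ : M → Λt) (α : Λt → X) (p : Λp × Bool) :
    Submodule R A :=
  Submodule.span R {x : A | ∃ (q : Λp × Bool) (s t : T q.1),
    ((p.2 < q.2) ∨ (p.2 = q.2 ∧ p.1 < q.1)) ∧
    s ∈ D.Iset e ι κ α q.1 q.2 ∧ t ∈ D.Jset e ι κ α q.1 q.2 ∧ x = D.c q.1 s t}

end Idem

end CellDatum

end Cellular

/-!
Every basis element `c l s t` is fixed on the left by an idempotent `e μ` and on the right by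
an idempotent `e ν`. These idempotents and the cell poset control which basis elements can
occur in a product `c i * c j`: it vanishes unless the right idempotent of `i` is the left one
of `j`, and otherwise only indices with the left idempotent of `i`, the right idempotent of
`j` and a level above both levels occur. Comparing `α`-levels then shows that the index sets
`parabIndex ε` multiply according to `ε ⊔ ε'`, which gives the subalgebra. The standardly
based rules come from truncating the cellular multiplication rule of `A` to the `(λ, ε)` cell:
what is cut off lies strictly above `(λ, ε)` in `Ω`.
-/

open Submodule

theorem Module.Basis.exists_basis_of_eq_span_image {ι R M : Type*} [Semiring R]
    [AddCommMonoid M] [Module R M] (b : Basis ι R M) (P : ι → Prop) {N : Submodule R M}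
    (hN : N = span R (b '' {i | P i})) :
    ∃ bb : Basis {i // P i} R N, ∀ i, (bb i : M) = b i := by
  have hli : LinearIndependent R (b ∘ Subtype.val : {i // P i} → M) :=
    b.linearIndependent.comp _ Subtype.val_injective
  have hspan : span R (Set.range (b ∘ Subtype.val : {i // P i} → M)) = N := by
    rw [hN, Set.range_comp, Subtype.range_coe_subtype]
  exact ⟨(Basis.span hli).map (LinearEquiv.ofEq _ _ hspan), fun i => by
    simp [Basis.span_apply]⟩

namespace CellDatum

variable {R A : Type u} [CommRing R] [Ring A] [Algebra R A]
variable {Λp : Type u} [PartialOrder Λp] {T : Λp → Type u} [∀ l, Fintype (T l)]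
variable (D : CellDatum R A Λp T)

def basisSpan (S : Set ((l : Λp) × (T l × T l))) : Submodule R A :=
  span R (D.basis '' S)

theorem mem_basisSpan_iff {S : Set ((l : Λp) × (T l × T l))} {z : A} :
    z ∈ D.basisSpan S ↔ ∀ k, D.basis.repr z k ≠ 0 → k ∈ S := by
  simp [basisSpan, D.basis.mem_span_image, Set.subset_def]

theorem c_mem_basisSpan {S : Set ((l : Λp) × (T l × T l))} {l : Λp} {s t : T l}
    (h : ⟨l, (s, t)⟩ ∈ S) : D.c l s t ∈ D.basisSpan S :=
  D.basis_eq l s t ▸ subset_span ⟨_, h, rfl⟩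

theorem basisSpan_mono {S S' : Set ((l : Λp) × (T l × T l))} (h : S ⊆ S') :
    D.basisSpan S ≤ D.basisSpan S' :=
  span_mono (Set.image_mono h)

theorem span_c_eq_basisSpan (P : Λp → Prop) :
    span R {x : A | ∃ l s t, P l ∧ x = D.c l s t} = D.basisSpan {k | P k.1} := by
  congr 1
  ext x
  constructor
  · rintro ⟨l, s, t, h, rfl⟩
    exact ⟨⟨l, (s, t)⟩, h, D.basis_eq l s t⟩
  · rintro ⟨⟨l, s, t⟩, h, rfl⟩
    exact ⟨l, s, t, h, D.basis_eq l s t⟩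

theorem Aup_eq_basisSpan (l : Λp) : D.Aup l = D.basisSpan {k | l < k.1} :=
  D.span_c_eq_basisSpan _

theorem map_mem_of_forall_c (f : A →ₗ[R] A) {N : Submodule R A}
    (h : ∀ l s t, f (D.c l s t) ∈ N) (z : A) : f z ∈ N := by
  suffices hle : ⊤ ≤ N.comap f from hle trivial
  rw [← D.basis.span_eq, span_le]
  rintro _ ⟨⟨l, s, t⟩, rfl⟩
  rw [D.basis_eq]
  exact h l s t

theorem star_star (a : A) : D.star (D.star a) = a := by
  have h : D.star ∘ₗ D.star = LinearMap.id :=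
    D.basis.ext fun ⟨l, s, t⟩ => by simp [D.basis_eq, D.star_c]
  exact DFunLike.congr_fun h a

theorem star_mem_Aup {l : Λp} {x : A} (h : x ∈ D.Aup l) : D.star x ∈ D.Aup l := by
  suffices hle : D.Aup l ≤ (D.Aup l).comap D.star from hle h
  rw [Aup, span_le]
  rintro _ ⟨l', s', t', h', rfl⟩
  rw [SetLike.mem_coe, mem_comap, D.star_c]
  exact subset_span ⟨l', t', s', h', rfl⟩

theorem mul_c_sub_sum_mem_Aup (l : Λp) (s t : T l) (a : A) :
    a * D.c l s t - ∑ u, D.coeff l s (D.star a) u • D.c l u t ∈ D.Aup l := by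
  simpa only [map_sub, map_sum, D.star_mul, D.star_star, D.star_c, map_smul] using
    D.star_mem_Aup (D.mul_rule l t s (D.star a))

theorem mem_basisSpan_level_of_sub_sum {l : Λp} {x : A} (f : T l → T l × T l) (r : T l → R)
    (h : x - ∑ w, r w • D.c l (f w).1 (f w).2 ∈ D.Aup l) :
    x ∈ D.basisSpan {k | l ≤ k.1} := by
  rw [← sub_add_cancel x (∑ w, r w • D.c l (f w).1 (f w).2)]
  rw [D.Aup_eq_basisSpan] at h
  exact add_mem (D.basisSpan_mono (fun _ hk => hk.le) h)
    (sum_mem fun w _ => smul_mem _ _ (D.c_mem_basisSpan (le_refl l)))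

theorem c_mul_mem_basisSpan (l : Λp) (s t : T l) (z : A) :
    D.c l s t * z ∈ D.basisSpan {k | l ≤ k.1} :=
  D.mem_basisSpan_level_of_sub_sum (fun v => (s, v)) _ (D.mul_rule l s t z)

theorem mul_c_mem_basisSpan (z : A) (l : Λp) (s t : T l) :
    z * D.c l s t ∈ D.basisSpan {k | l ≤ k.1} :=
  D.mem_basisSpan_level_of_sub_sum (fun u => (u, t)) _ (D.mul_c_sub_sum_mem_Aup l s t z)

variable {Λt M X : Type u} [PartialOrder X]
variable {ι : Λp → Λt} {κ : M → Λt} {e : M → A} {α : Λt → X}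

/-- `parabIndex false` indexes the basis of `Ã^α`; `parabIndex true` indexes the `c l s t`
with `s ∈ T⁻_α(l)`, which span an ideal of `Ã^α`. -/
def parabIndex (e : M → A) (ι : Λp → Λt) (κ : M → Λt) (α : Λt → X) (ε : Bool) :
    Set ((l : Λp) × (T l × T l)) :=
  {k | ∃ ε', ε ≤ ε' ∧ k.2.1 ∈ D.Iset e ι κ α k.1 ε' ∧ k.2.2 ∈ D.Jset e ι κ α k.1 ε'}

theorem Iset_subset_Jset (l : Λp) (ε : Bool) :
    D.Iset e ι κ α l ε ⊆ D.Jset e ι κ α l ε := by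
  cases ε
  · exact subset_rfl
  · exact Set.subset_univ _

theorem parab_eq_basisSpan :
    D.parab e ι κ α = D.basisSpan {k |
      ∃ ε, k.2.1 ∈ D.Iset e ι κ α k.1 ε ∧ k.2.2 ∈ D.Jset e ι κ α k.1 ε} := by
  rw [parab, basisSpan]
  congr 1
  ext x
  constructor
  · rintro ⟨l, ε, s, t, hs, ht, rfl⟩
    exact ⟨⟨l, (s, t)⟩, ⟨ε, hs, ht⟩, D.basis_eq l s t⟩
  · rintro ⟨⟨l, s, t⟩, ⟨ε, hs, ht⟩, rfl⟩
    exact ⟨l, ε, s, t, hs, ht, D.basis_eq l s t⟩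

theorem parab_eq_basisSpan_parabIndex :
    D.parab e ι κ α = D.basisSpan (D.parabIndex e ι κ α false) := by
  simp [parab_eq_basisSpan, parabIndex]

theorem upperOmParab_eq_basisSpan (l : Λp) (ε : Bool) :
    D.upperOmParab e ι κ α (l, ε) = D.basisSpan {k | ∃ ε', (ε < ε' ∨ (ε = ε' ∧ l < k.1)) ∧
      k.2.1 ∈ D.Iset e ι κ α k.1 ε' ∧ k.2.2 ∈ D.Jset e ι κ α k.1 ε'} := by
  rw [upperOmParab, basisSpan]
  congr 1
  ext x
  constructor
  · rintro ⟨⟨m, ε'⟩, s, t, hlt, hs, ht, rfl⟩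
    exact ⟨⟨m, (s, t)⟩, ⟨ε', hlt, hs, ht⟩, D.basis_eq m s t⟩
  · rintro ⟨⟨m, s, t⟩, ⟨ε', hlt, hs, ht⟩, rfl⟩
    exact ⟨⟨m, ε'⟩, s, t, hlt, hs, ht, D.basis_eq m s t⟩

theorem levi_le_parab : D.levi e ι κ α ≤ D.parab e ι κ α := by
  rw [levi, span_le]
  rintro _ ⟨l, ε, s, t, hs, ht, rfl⟩
  exact subset_span ⟨l, ε, s, t, hs, D.Iset_subset_Jset l ε ht, rfl⟩

variable {D}

/-- The hypotheses `hij`, `hrow`, `hcol`, `hik`, `hjk` say that `c k` can occur in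
`c i * c j`. -/
theorem mem_parabIndex_of_mul {ε ε' : Bool} {i j k : (l : Λp) × (T l × T l)}
    (hi : i ∈ D.parabIndex e ι κ α ε) (hj : j ∈ D.parabIndex e ι κ α ε')
    (hij : ∀ μ ν, i.2.2 ∈ D.Tset e i.1 μ → j.2.1 ∈ D.Tset e j.1 ν → μ = ν)
    (hrow : ∀ μ, i.2.1 ∈ D.Tset e i.1 μ → k.2.1 ∈ D.Tset e k.1 μ)
    (hcol : ∀ ν, j.2.2 ∈ D.Tset e j.1 ν → k.2.2 ∈ D.Tset e k.1 ν)
    (hik : α (ι i.1) ≤ α (ι k.1)) (hjk : α (ι j.1) ≤ α (ι k.1)) :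
    k ∈ D.parabIndex e ι κ α (ε ⊔ ε') := by
  obtain ⟨εi, hεi, hsi, hti⟩ := hi
  obtain ⟨εj, hεj, hsj, htj⟩ := hj
  cases εi with
  | true =>
    obtain ⟨μ, hμ, hlt⟩ := hsi
    exact ⟨true, Bool.le_true _, ⟨μ, hrow μ hμ, hlt.trans_le hik⟩, Set.mem_univ _⟩
  | false =>
    obtain ⟨μ, hμ, hrowi⟩ := hsi
    obtain ⟨μ', hμ', hcoli⟩ := hti
    cases εj with
    | true =>
      obtain ⟨ν, hν, hlt⟩ := hsj
      refine ⟨true, Bool.le_true _, ⟨μ, hrow μ hμ, ?_⟩, Set.mem_univ _⟩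
      calc α (κ μ) = α (κ ν) := by rw [← hrowi, hcoli, hij μ' ν hμ' hν]
        _ < α (ι j.1) := hlt
        _ ≤ α (ι k.1) := hjk
    | false =>
      obtain ⟨ν, hν, hrowj⟩ := hsj
      obtain ⟨ν', hν', hcolj⟩ := htj
      have hlevel : α (ι i.1) = α (ι j.1) := by rw [hcoli, hij μ' ν hμ' hν, hrowj]
      rcases hik.lt_or_eq with hlt | heq
      · exact ⟨true, Bool.le_true _, ⟨μ, hrow μ hμ, hrowi ▸ hlt⟩, Set.mem_univ _⟩
      · exact ⟨false, sup_le hεi hεj, ⟨μ, hrow μ hμ, heq.symm.trans hrowi⟩,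
          ⟨ν', hcol ν' hν', heq.symm.trans (hlevel.trans hcolj)⟩⟩

open Classical in
theorem sub_sum_mem_upperOmParab {l : Λp} {ε : Bool} {x : A}
    (hx : x ∈ D.basisSpan (D.parabIndex e ι κ α ε)) (f : T l → T l × T l) (r : T l → R)
    (hxr : x - ∑ w, r w • D.c l (f w).1 (f w).2 ∈ D.Aup l) :
    x - ∑ w, (if (f w).1 ∈ D.Iset e ι κ α l ε ∧ (f w).2 ∈ D.Jset e ι κ α l ε then r w else 0) •
      D.c l (f w).1 (f w).2 ∈ D.upperOmParab e ι κ α (l, ε) := by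
  set y := ∑ w, r w • D.c l (f w).1 (f w).2
  set y' := ∑ w, (if (f w).1 ∈ D.Iset e ι κ α l ε ∧ (f w).2 ∈ D.Jset e ι κ α l ε then r w
    else 0) • D.c l (f w).1 (f w).2
  have hcell : x - y' ∈ D.basisSpan (D.parabIndex e ι κ α ε) := by
    refine sub_mem hx (sum_mem fun w _ => ?_)
    split_ifs with hw
    · exact smul_mem _ _ (D.c_mem_basisSpan ⟨ε, le_rfl, hw⟩)
    · rw [zero_smul]
      exact zero_mem _
  have hlevel : x - y' ∈ D.basisSpan {k |
      k.2.1 ∈ D.Iset e ι κ α k.1 ε → k.2.2 ∈ D.Jset e ι κ α k.1 ε → l < k.1} := by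
    rw [← sub_add_sub_cancel x y y', ← Finset.sum_sub_distrib]
    rw [D.Aup_eq_basisSpan] at hxr
    refine add_mem (D.basisSpan_mono (fun k hk => ?_) hxr) (sum_mem fun w _ => ?_)
    · exact fun _ _ => hk
    rw [← sub_smul]
    split_ifs with hw
    · rw [sub_self, zero_smul]
      exact zero_mem _
    · exact smul_mem _ _ (D.c_mem_basisSpan fun hp hq => absurd ⟨hp, hq⟩ hw)
  rw [upperOmParab_eq_basisSpan, mem_basisSpan_iff]
  intro k hk
  obtain ⟨ε', hεε', hs, ht⟩ := D.mem_basisSpan_iff.1 hcell k hk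
  have hlk := D.mem_basisSpan_iff.1 hlevel k hk
  rcases hεε'.lt_or_eq with hlt | rfl
  · exact ⟨ε', Or.inl hlt, hs, ht⟩
  · exact ⟨ε, Or.inr ⟨rfl, hlk hs ht⟩, hs, ht⟩

variable [PartialOrder Λt] [Fintype M]

namespace IdemData

theorem iota_mono (hA : D.IdemData ι κ e) : Monotone ι :=
  fun _ _ h => (hA.order_iff _ _).2 h

theorem c_mul_c_eq_zero (hA : D.IdemData ι κ e) {l m : Λp} {s t : T l} {u v : T m}
    {μ ν : M} (ht : t ∈ D.Tset e l μ) (hu : u ∈ D.Tset e m ν) (hμν : μ ≠ ν) :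
    D.c l s t * D.c m u v = 0 := by
  rw [← ht.1 s, ← hu.2 v, mul_assoc, ← mul_assoc (e μ), hA.orth μ ν hμν, zero_mul, mul_zero]

theorem idem_mul_mem_basisSpan (hA : D.IdemData ι κ e) (μ : M) (z : A) :
    e μ * z ∈ D.basisSpan {k | k.2.1 ∈ D.Tset e k.1 μ} := by
  refine D.map_mem_of_forall_c (LinearMap.mulLeft R (e μ)) (fun l s t => ?_) z
  obtain ⟨ν, hν⟩ := hA.exists_idem l s
  rw [LinearMap.mulLeft_apply]
  by_cases h : μ = ν
  · subst h
    rw [hν.2 t]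
    exact D.c_mem_basisSpan hν
  · rw [← hν.2 t, ← mul_assoc, hA.orth μ ν h, zero_mul]
    exact zero_mem _

theorem mul_idem_mem_basisSpan (hA : D.IdemData ι κ e) (μ : M) (z : A) :
    z * e μ ∈ D.basisSpan {k | k.2.2 ∈ D.Tset e k.1 μ} := by
  refine D.map_mem_of_forall_c (LinearMap.mulRight R (e μ)) (fun l s t => ?_) z
  obtain ⟨ν, hν⟩ := hA.exists_idem l t
  rw [LinearMap.mulRight_apply]
  by_cases h : ν = μ
  · subst h
    rw [hν.1 s]
    exact D.c_mem_basisSpan hν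
  · rw [← hν.1 s, mul_assoc, hA.orth ν μ h, mul_zero]
    exact zero_mem _

theorem idem_mem_basisSpan (hA : D.IdemData ι κ e) (μ : M) :
    e μ ∈ D.basisSpan {k | κ μ ≤ ι k.1} :=
  D.span_c_eq_basisSpan (fun l => κ μ ≤ ι l) ▸ hA.mem_span μ

theorem c_mul_c_mem_basisSpan (hA : D.IdemData ι κ e) (l m : Λp) (s t : T l) (u v : T m) :
    D.c l s t * D.c m u v ∈ D.basisSpan {k |
      (∀ μ, s ∈ D.Tset e l μ → k.2.1 ∈ D.Tset e k.1 μ) ∧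
      (∀ ν, v ∈ D.Tset e m ν → k.2.2 ∈ D.Tset e k.1 ν) ∧ l ≤ k.1 ∧ m ≤ k.1} := by
  rw [mem_basisSpan_iff]
  intro k hk
  refine ⟨fun μ hμ => ?_, fun ν hν => ?_, ?_, ?_⟩
  · have h := hA.idem_mul_mem_basisSpan μ (D.c l s t * D.c m u v)
    rw [← mul_assoc, hμ.2 t] at h
    exact D.mem_basisSpan_iff.1 h k hk
  · have h := hA.mul_idem_mem_basisSpan ν (D.c l s t * D.c m u v)
    rw [mul_assoc, hν.1 u] at h
    exact D.mem_basisSpan_iff.1 h k hk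
  · exact D.mem_basisSpan_iff.1 (D.c_mul_mem_basisSpan l s t _) k hk
  · exact D.mem_basisSpan_iff.1 (D.mul_c_mem_basisSpan _ m u v) k hk

theorem mul_mem_basisSpan_parabIndex (hA : D.IdemData ι κ e) (hα : Monotone α)
    {ε ε' : Bool} {x y : A} (hx : x ∈ D.basisSpan (D.parabIndex e ι κ α ε))
    (hy : y ∈ D.basisSpan (D.parabIndex e ι κ α ε')) :
    x * y ∈ D.basisSpan (D.parabIndex e ι κ α (ε ⊔ ε')) := by
  have hxy := mul_mem_mul hx hy
  rw [basisSpan, basisSpan, span_mul_span] at hxy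
  refine span_le.2 ?_ hxy
  rintro _ ⟨_, ⟨⟨l, s, t⟩, hi, rfl⟩, _, ⟨⟨m, u, v⟩, hj, rfl⟩, rfl⟩
  show D.basis ⟨l, (s, t)⟩ * D.basis ⟨m, (u, v)⟩ ∈ _
  rw [D.basis_eq, D.basis_eq]
  by_cases hij : ∀ μ ν, t ∈ D.Tset e l μ → u ∈ D.Tset e m ν → μ = ν
  · refine D.basisSpan_mono (fun k hk => ?_) (hA.c_mul_c_mem_basisSpan l m s t u v)
    obtain ⟨hrow, hcol, hlk, hmk⟩ := hk
    exact mem_parabIndex_of_mul hi hj hij hrow hcol (hα (hA.iota_mono hlk))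
      (hα (hA.iota_mono hmk))
  · push Not at hij
    obtain ⟨μ, ν, ht, hu, hμν⟩ := hij
    rw [hA.c_mul_c_eq_zero ht hu hμν]
    exact zero_mem _

theorem mul_mem_parab (hA : D.IdemData ι κ e) (hα : Monotone α) {x y : A}
    (hx : x ∈ D.parab e ι κ α) (hy : y ∈ D.parab e ι κ α) : x * y ∈ D.parab e ι κ α := by
  rw [parab_eq_basisSpan_parabIndex] at hx hy ⊢
  simpa using hA.mul_mem_basisSpan_parabIndex hα hx hy

theorem one_mem_parab (hA : D.IdemData ι κ e) (hα : Monotone α) :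
    (1 : A) ∈ D.parab e ι κ α := by
  rw [← hA.sum_one, parab_eq_basisSpan]
  refine sum_mem fun μ _ => ?_
  have hrow := hA.idem_mul_mem_basisSpan μ (e μ)
  have hcol := hA.mul_idem_mem_basisSpan μ (e μ)
  rw [hA.idem] at hrow hcol
  rw [mem_basisSpan_iff]
  intro k hk
  have hs := D.mem_basisSpan_iff.1 hrow k hk
  have ht := D.mem_basisSpan_iff.1 hcol k hk
  rcases (hα (D.mem_basisSpan_iff.1 (hA.idem_mem_basisSpan μ) k hk)).lt_or_eq with hlt | heq
  · exact ⟨true, ⟨μ, hs, hlt⟩, Set.mem_univ _⟩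
  · exact ⟨false, ⟨μ, hs, heq.symm⟩, ⟨μ, ht, heq.symm⟩⟩

theorem parab_mul_c_rule (hA : D.IdemData ι κ e) (hα : Monotone α) :
    ∀ (l : Λp) (ε : Bool) (s : T l), s ∈ D.Iset e ι κ α l ε →
      ∀ a ∈ D.parab e ι κ α, ∃ r : T l → R,
        (∀ u, r u ≠ 0 → u ∈ D.Iset e ι κ α l ε) ∧
        ∀ t ∈ D.Jset e ι κ α l ε,
          a * D.c l s t - ∑ u, r u • D.c l u t ∈ D.upperOmParab e ι κ α (l, ε) := by
  classical
  intro l ε s hs a ha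
  refine ⟨fun u => if u ∈ D.Iset e ι κ α l ε then D.coeff l s (D.star a) u else 0,
    fun u hu => by_contra fun h => hu (if_neg h), fun t ht => ?_⟩
  rw [parab_eq_basisSpan_parabIndex] at ha
  have hx : a * D.c l s t ∈ D.basisSpan (D.parabIndex e ι κ α ε) := by
    simpa using hA.mul_mem_basisSpan_parabIndex hα ha (D.c_mem_basisSpan ⟨ε, le_rfl, hs, ht⟩)
  simpa [ht] using sub_sum_mem_upperOmParab hx (fun u => (u, t)) _
    (D.mul_c_sub_sum_mem_Aup l s t a)

theorem c_mul_parab_rule (hA : D.IdemData ι κ e) (hα : Monotone α) :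
    ∀ (l : Λp) (ε : Bool) (t : T l), t ∈ D.Jset e ι κ α l ε →
      ∀ a ∈ D.parab e ι κ α, ∃ r : T l → R,
        (∀ v, r v ≠ 0 → v ∈ D.Jset e ι κ α l ε) ∧
        ∀ s ∈ D.Iset e ι κ α l ε,
          D.c l s t * a - ∑ v, r v • D.c l s v ∈ D.upperOmParab e ι κ α (l, ε) := by
  classical
  intro l ε t ht a ha
  refine ⟨fun v => if v ∈ D.Jset e ι κ α l ε then D.coeff l t a v else 0,
    fun v hv => by_contra fun h => hv (if_neg h), fun s hs => ?_⟩
  rw [parab_eq_basisSpan_parabIndex] at ha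
  have hx : D.c l s t * a ∈ D.basisSpan (D.parabIndex e ι κ α ε) := by
    simpa using hA.mul_mem_basisSpan_parabIndex hα (D.c_mem_basisSpan ⟨ε, le_rfl, hs, ht⟩) ha
  simpa [hs] using sub_sum_mem_upperOmParab hx (fun v => (s, v)) _ (D.mul_rule l s t a)

end IdemData

end CellDatum

theorem stmt_13_general
    {R A : Type u} [CommRing R] [Ring A] [Algebra R A]
    {Λp : Type u} [PartialOrder Λp]
    {T : Λp → Type u} [∀ l, Fintype (T l)]
    {Λt M X : Type u} [PartialOrder Λt] [PartialOrder X] [Fintype M]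
    (D : CellDatum R A Λp T)
    (ι : Λp → Λt) (κ : M → Λt) (e : M → A)
    (hA : D.IdemData ι κ e)
    (α : Λt → X) (hα : Monotone α) :
    D.levi e ι κ α ≤ D.parab e ι κ α ∧
    (1 : A) ∈ D.parab e ι κ α ∧
    (∀ x y : A, x ∈ D.parab e ι κ α → y ∈ D.parab e ι κ α →
      x * y ∈ D.parab e ι κ α) ∧
    (∃ bb : Module.Basis {p : (l : Λp) × (T l × T l) //
        ∃ ε, p.2.1 ∈ D.Iset e ι κ α p.1 ε ∧ p.2.2 ∈ D.Jset e ι κ α p.1 ε}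
        R ↥(D.parab e ι κ α),
      ∀ p, (bb p : A) = D.c p.1.1 p.1.2.1 p.1.2.2) ∧
    -- left multiplication rule (coefficients independent of the second index)
    (∀ (l : Λp) (ε : Bool) (s : T l), s ∈ D.Iset e ι κ α l ε →
      ∀ a ∈ D.parab e ι κ α, ∃ r : T l → R,
        (∀ u, r u ≠ 0 → u ∈ D.Iset e ι κ α l ε) ∧
        ∀ t ∈ D.Jset e ι κ α l ε,
          a * D.c l s t - ∑ u, r u • D.c l u t ∈ D.upperOmParab e ι κ α (l, ε)) ∧
    -- right multiplication rule (coefficients independent of the first index)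
    (∀ (l : Λp) (ε : Bool) (t : T l), t ∈ D.Jset e ι κ α l ε →
      ∀ a ∈ D.parab e ι κ α, ∃ r : T l → R,
        (∀ v, r v ≠ 0 → v ∈ D.Jset e ι κ α l ε) ∧
        ∀ s ∈ D.Iset e ι κ α l ε,
          D.c l s t * a - ∑ v, r v • D.c l s v ∈ D.upperOmParab e ι κ α (l, ε)) := by
  obtain ⟨bb, hbb⟩ := D.basis.exists_basis_of_eq_span_image _ (D.parab_eq_basisSpan (ι := ι) (κ := κ) (e := e) (α := α))
  exact ⟨D.levi_le_parab, hA.one_mem_parab hα, fun _ _ => hA.mul_mem_parab hα,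
    ⟨bb, fun p => (hbb p).trans (D.basis_eq _ _ _)⟩, hA.parab_mul_c_rule hα,
    hA.c_mul_parab_rule hα⟩

/-- the parabolic type subalgebra `Ã^α`, spanned by the `c^λ_{st}` with
`(s,t) ∈ Ĩ(λ,ε) × J̃(λ,ε)`, is a subalgebra of `A` containing `A^α`, and it is a
standardly based algebra with standard basis `Z̃^α` with respect to the poset `Ω`:
left (resp. right) multiplication acts on the first (resp. second) index modulo higher
terms, with structure constants independent of the other index. -/
theorem stmt_13
    {R A : Type u} [CommRing R] [Ring A] [Algebra R A]
    {Λp : Type u} [PartialOrder Λp] [Fintype Λp]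
    {T : Λp → Type u} [∀ l, Fintype (T l)]
    {Λt M X : Type u} [PartialOrder Λt] [PartialOrder X] [Fintype M]
    (D : CellDatum R A Λp T)
    (ι : Λp → Λt) (κ : M → Λt) (e : M → A)
    (hA : D.IdemData ι κ e)
    (α : Λt → X) (hα : Monotone α) :
    D.levi e ι κ α ≤ D.parab e ι κ α ∧
    (1 : A) ∈ D.parab e ι κ α ∧
    (∀ x y : A, x ∈ D.parab e ι κ α → y ∈ D.parab e ι κ α →
      x * y ∈ D.parab e ι κ α) ∧
    (∃ bb : Module.Basis {p : (l : Λp) × (T l × T l) //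
        ∃ ε, p.2.1 ∈ D.Iset e ι κ α p.1 ε ∧ p.2.2 ∈ D.Jset e ι κ α p.1 ε}
        R ↥(D.parab e ι κ α),
      ∀ p, (bb p : A) = D.c p.1.1 p.1.2.1 p.1.2.2) ∧
    -- left multiplication rule (coefficients independent of the second index)
    (∀ (l : Λp) (ε : Bool) (s : T l), s ∈ D.Iset e ι κ α l ε →
      ∀ a ∈ D.parab e ι κ α, ∃ r : T l → R,
        (∀ u, r u ≠ 0 → u ∈ D.Iset e ι κ α l ε) ∧
        ∀ t ∈ D.Jset e ι κ α l ε,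
          a * D.c l s t - ∑ u, r u • D.c l u t ∈ D.upperOmParab e ι κ α (l, ε)) ∧
    -- right multiplication rule (coefficients independent of the first index)
    (∀ (l : Λp) (ε : Bool) (t : T l), t ∈ D.Jset e ι κ α l ε →
      ∀ a ∈ D.parab e ι κ α, ∃ r : T l → R,
        (∀ v, r v ≠ 0 → v ∈ D.Jset e ι κ α l ε) ∧
        ∀ s ∈ D.Iset e ι κ α l ε,
          D.c l s t * a - ∑ v, r v • D.c l s v ∈ D.upperOmParab e ι κ α (l, ε)) :=
  stmt_13_general D ι κ e hA α hα
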